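/- Let n ≥ 2 be an integer, λ ∈ (0, 1/n), α = (1 − nλ)/(n − 1), and let E_λ^n = { (λ+α)·∑_{t=1}^{∞} a_t λ^t : a_t ∈ {0,1,…,n−1} for all t ≥ 1 }. Then the maximal length of an arithmetic progression contained in E_λ^n equals n if and only if λ < 1/(2n−1); that is: E_λ^n contains an arithmetic progression of length n but no arithmetic progression of length n+1, if and only if λ ∈ (0, 1/(2n−1)). -/

import Mathlib

/-- The homogeneous self-similar set `E_λ^n` with digits `{0, …, n-1}` and
`α = (1 - nλ)/(n - 1)`, consisting of all points `(λ+α)·∑_{t≥1} a_t λ^t`. -/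
def selfSimilarSet (n : ℕ) (lam : ℝ) : Set ℝ :=
  {x : ℝ | ∃ a : ℕ → ℕ, (∀ t, a t < n) ∧
    x = (lam + (1 - n * lam) / (n - 1)) * ∑' t : ℕ, (a t : ℝ) * lam ^ (t + 1)}

/-!
Write `G` for the set of sums `∑_{t ≥ 0} a_t λ^t` with digits `a_t < n`. Then `E_λ^n` is a
positive multiple of `G`, `G = ⋃_{d<n} (d + λG)` and `G ⊆ [0, M]` with `M = (n-1)/(1-λ)`; the
integers `0, …, n-1` always form an arithmetic progression of length `n` in `G`.

If `(2n-1)λ < 1` then `λM < 1/2`: the pieces `d + λG` have length at most `λM` and are separated by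
gaps longer than `λM`. Two of the `n+1` terms of a progression share a piece, so its step is at most
`λM`; hence it cannot jump a gap, lies in a single piece `d + λG`, and `x ↦ (x - d)/λ` maps it to a
progression in `G` with step `δ/λ`. Iterating contradicts the bound `δ/λ^k ≤ λM`.

If `(2n-1)λ ≥ 1`, the greedy algorithm expands every point of `[0, 2M]` in base `1/λ` with digits
`< 2n-1`, and splitting each such digit shows `[-M, M] ⊆ G - G`. For `x, y ∈ G` with
`y - x = 1/(2λ)`, the points `p + λx` and `p + λy = p + λx + 1/2` interleave into a progression of
step `1/2` and length `n+1`.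
-/

open Set Filter Topology
open scoped Pointwise

def HasAP (S : Set ℝ) (k : ℕ) : Prop :=
  ∃ a δ : ℝ, 0 < δ ∧ ∀ i : ℕ, i < k → a + i * δ ∈ S

theorem HasAP.smul {S : Set ℝ} {k : ℕ} (h : HasAP S k) {c : ℝ} (hc : 0 < c) :
    HasAP (c • S) k := by
  obtain ⟨a, δ, hδ, H⟩ := h
  refine ⟨c * a, c * δ, mul_pos hc hδ, fun i hi => mem_smul_set.2 ⟨_, H i hi, ?_⟩⟩
  rw [smul_eq_mul]
  ring

theorem hasAP_smul_iff {S : Set ℝ} {k : ℕ} {c : ℝ} (hc : 0 < c) :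
    HasAP (c • S) k ↔ HasAP S k :=
  ⟨fun h => inv_smul_smul₀ hc.ne' S ▸ h.smul (inv_pos.2 hc), fun h => h.smul hc⟩

def digitSet (n : ℕ) (lam : ℝ) : Set ℝ :=
  {x | ∃ a : ℕ → ℕ, (∀ t, a t < n) ∧ x = ∑' t, (a t : ℝ) * lam ^ t}

theorem selfSimilarSet_eq_smul (n : ℕ) (lam : ℝ) :
    selfSimilarSet n lam = ((lam + (1 - n * lam) / (n - 1)) * lam) • digitSet n lam := by
  have hshift (a : ℕ → ℕ) :
      ∑' t, (a t : ℝ) * lam ^ (t + 1) = (∑' t, (a t : ℝ) * lam ^ t) * lam := by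
    simp_rw [pow_succ, ← mul_assoc, tsum_mul_right]
  ext x
  simp only [selfSimilarSet, digitSet, mem_smul_set, smul_eq_mul]
  constructor
  · rintro ⟨a, ha, rfl⟩
    exact ⟨_, ⟨a, ha, rfl⟩, by rw [hshift]; ring⟩
  · rintro ⟨_, ⟨a, ha, rfl⟩, rfl⟩
    exact ⟨a, ha, by rw [hshift]; ring⟩

section Digits

variable {n : ℕ} {lam : ℝ}

theorem summable_digits (h0 : 0 ≤ lam) (h1 : lam < 1) {a : ℕ → ℕ} (ha : ∀ t, a t < n) :
    Summable fun t => (a t : ℝ) * lam ^ t :=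
  .of_nonneg_of_le (fun t => by positivity)
    (fun t => mul_le_mul_of_nonneg_right (by exact_mod_cast (ha t).le) (pow_nonneg h0 t))
    ((summable_geometric_of_lt_one h0 h1).mul_left (n : ℝ))

theorem natCast_mem_digitSet {i : ℕ} (hi : i < n) : (i : ℝ) ∈ digitSet n lam := by
  refine ⟨fun t => if t = 0 then i else 0, fun t => by dsimp only; split_ifs <;> omega, ?_⟩
  rw [tsum_eq_single 0 fun t ht => by simp [ht]]
  simp

theorem hasAP_digitSet : HasAP (digitSet n lam) n :=
  ⟨0, 1, one_pos, fun i hi => by simpa using natCast_mem_digitSet hi⟩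

theorem digitSet_subset_Icc (h0 : 0 ≤ lam) (h1 : lam < 1) :
    digitSet n lam ⊆ Icc 0 ((n - 1) / (1 - lam)) := by
  rintro _ ⟨a, ha, rfl⟩
  have hle (t : ℕ) : (a t : ℝ) ≤ n - 1 := by
    have : (a t : ℝ) + 1 ≤ n := by exact_mod_cast ha t
    linarith
  refine ⟨tsum_nonneg fun t => by positivity, ?_⟩
  calc ∑' t, (a t : ℝ) * lam ^ t ≤ ∑' t, ((n : ℝ) - 1) * lam ^ t :=
        (summable_digits h0 h1 ha).tsum_le_tsum
          (fun t => mul_le_mul_of_nonneg_right (hle t) (pow_nonneg h0 t))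
          ((summable_geometric_of_lt_one h0 h1).mul_left _)
    _ = (n - 1) / (1 - lam) := by
        rw [tsum_mul_left, tsum_geometric_of_lt_one h0 h1, div_eq_mul_inv]

theorem mem_digitSet_iff (h0 : 0 ≤ lam) (h1 : lam < 1) {x : ℝ} :
    x ∈ digitSet n lam ↔ ∃ d < n, ∃ y ∈ digitSet n lam, x = d + lam * y := by
  constructor
  · rintro ⟨a, ha, rfl⟩
    refine ⟨a 0, ha 0, _, ⟨fun t => a (t + 1), fun t => ha _, rfl⟩, ?_⟩
    rw [(summable_digits h0 h1 ha).tsum_eq_zero_add, ← tsum_mul_left]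
    simp_rw [pow_succ]
    congr 1
    · simp
    · exact tsum_congr fun t => by ring
  · rintro ⟨d, hd, _, ⟨a, ha, rfl⟩, rfl⟩
    have hb : ∀ t, (if t = 0 then d else a (t - 1)) < n := fun t => by split_ifs <;> simp [*]
    refine ⟨_, hb, ?_⟩
    rw [(summable_digits h0 h1 hb).tsum_eq_zero_add, ← tsum_mul_left]
    simp_rw [pow_succ]
    congr 1
    · simp
    · exact tsum_congr fun t => by simp; ring

end Digits

noncomputable def greedyDigit (n : ℕ) (r : ℝ) : ℕ := min (n - 1) ⌊r⌋₊

noncomputable def greedyStep (n : ℕ) (lam r : ℝ) : ℝ := (r - greedyDigit n r) / lam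

section Greedy

variable {n : ℕ} {lam : ℝ}

theorem mapsTo_greedyStep (h1 : lam < 1) (hn : 1 ≤ n * lam) :
    MapsTo (greedyStep n lam) (Icc 0 ((n - 1) / (1 - lam))) (Icc 0 ((n - 1) / (1 - lam))) := by
  rintro r ⟨hr0, hrM⟩
  set M := ((n : ℝ) - 1) / (1 - lam)
  have h0 : 0 < lam := by nlinarith [(Nat.cast_nonneg n : (0 : ℝ) ≤ n)]
  have hn1 : 1 ≤ n := by
    exact_mod_cast (show (1 : ℝ) ≤ n by nlinarith [(Nat.cast_nonneg n : (0 : ℝ) ≤ n)])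
  have hM : M * (1 - lam) = n - 1 := div_mul_cancel₀ _ (by linarith)
  -- either greedy choice leaves a remainder of at most `lam * M`, using `1 ≤ lam * M` when `r < n - 1`
  have hdig : (greedyDigit n r : ℝ) ≤ r ∧ r - greedyDigit n r ≤ lam * M := by
    have hfloor := Nat.floor_le hr0
    have hlt := Nat.lt_floor_add_one r
    rcases le_total (n - 1) ⌊r⌋₊ with h | h
    · have hcast : ((n - 1 : ℕ) : ℝ) = n - 1 := by push_cast [Nat.cast_sub hn1]; ring
      have : ((n - 1 : ℕ) : ℝ) ≤ ⌊r⌋₊ := by exact_mod_cast h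
      rw [greedyDigit, min_eq_left h]
      constructor <;> nlinarith
    · rw [greedyDigit, min_eq_right h]
      constructor <;> nlinarith
  constructor
  · exact div_nonneg (by linarith [hdig.1]) h0.le
  · rw [greedyStep, div_le_iff₀ h0]
    linarith [hdig.2]

theorem sub_sum_greedyDigit (h0 : lam ≠ 0) (r : ℝ) (k : ℕ) :
    r - ∑ t ∈ Finset.range k, (greedyDigit n ((greedyStep n lam)^[t] r) : ℝ) * lam ^ t
      = lam ^ k * (greedyStep n lam)^[k] r := by
  induction k with
  | zero => simp
  | succ k ih =>
    rw [Finset.sum_range_succ, ← sub_sub, ih, Function.iterate_succ_apply', greedyStep, pow_succ]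
    field_simp

theorem Icc_subset_digitSet (h1 : lam < 1) (hn : 1 ≤ n * lam) :
    Icc 0 ((n - 1) / (1 - lam)) ⊆ digitSet n lam := by
  intro r hr
  set M := ((n : ℝ) - 1) / (1 - lam)
  have h0 : 0 < lam := by nlinarith [(Nat.cast_nonneg n : (0 : ℝ) ≤ n)]
  have hrem (k : ℕ) : (greedyStep n lam)^[k] r ∈ Icc 0 M :=
    (mapsTo_greedyStep h1 hn).iterate k hr
  have htail : Tendsto (fun k => lam ^ k * (greedyStep n lam)^[k] r) atTop (𝓝 0) := by
    refine squeeze_zero (fun k => mul_nonneg (pow_nonneg h0.le k) (hrem k).1)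
      (fun k => mul_le_mul_of_nonneg_left (hrem k).2 (pow_nonneg h0.le k)) ?_
    simpa using (tendsto_pow_atTop_nhds_zero_of_lt_one h0.le h1).mul_const M
  have hsum : HasSum (fun t => (greedyDigit n ((greedyStep n lam)^[t] r) : ℝ) * lam ^ t) r := by
    refine (hasSum_iff_tendsto_nat_of_nonneg (fun t => by positivity) r).2 ?_
    have hlim := htail.const_sub r
    rw [sub_zero] at hlim
    exact hlim.congr fun k => by rw [← sub_sum_greedyDigit h0.ne', sub_sub_cancel]
  refine ⟨_, fun t => ?_, hsum.tsum_eq.symm⟩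
  have : 1 ≤ n := by
    exact_mod_cast (show (1 : ℝ) ≤ n by nlinarith [(Nat.cast_nonneg n : (0 : ℝ) ≤ n)])
  exact (min_le_left _ _).trans_lt (by omega)

end Greedy

section Construction

variable {n : ℕ} {lam : ℝ}

theorem exists_add_eq_add_of_mem_digitSet (h0 : 0 ≤ lam) (h1 : lam < 1) {z : ℝ}
    (hz : z ∈ digitSet (2 * n - 1) lam) :
    ∃ x ∈ digitSet n lam, ∃ y ∈ digitSet n lam, z + x = y + (n - 1) / (1 - lam) := by
  obtain ⟨c, hc, rfl⟩ := hz
  set y : ℕ → ℕ := fun t => min (c t) (n - 1)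
  set x : ℕ → ℕ := fun t => n - 1 + y t - c t
  have hy (t : ℕ) : y t < n := by have := hc t; simp only [y]; omega
  have hx (t : ℕ) : x t < n := by have := hc t; simp only [x, y]; omega
  have hcxy (t : ℕ) : (c t : ℝ) + x t = y t + (n - 1) := by
    have hn : 1 ≤ n := by have := hc t; omega
    have : c t + x t = y t + (n - 1) := by have := hc t; simp only [x, y]; omega
    rw [← Nat.cast_one, ← Nat.cast_sub hn]
    exact_mod_cast this
  refine ⟨_, ⟨x, hx, rfl⟩, _, ⟨y, hy, rfl⟩, ?_⟩
  have hgeom : Summable fun t => ((n : ℝ) - 1) * lam ^ t :=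
    (summable_geometric_of_lt_one h0 h1).mul_left _
  calc ∑' t, (c t : ℝ) * lam ^ t + ∑' t, (x t : ℝ) * lam ^ t
      = ∑' t, ((y t : ℝ) * lam ^ t + ((n : ℝ) - 1) * lam ^ t) := by
        rw [← (summable_digits h0 h1 hc).tsum_add (summable_digits h0 h1 hx)]
        exact tsum_congr fun t => by rw [← add_mul, hcxy, add_mul]
    _ = ∑' t, (y t : ℝ) * lam ^ t + (n - 1) / (1 - lam) := by
        rw [(summable_digits h0 h1 hy).tsum_add hgeom, tsum_mul_left,
          tsum_geometric_of_lt_one h0 h1, div_eq_mul_inv]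

theorem Icc_subset_digitSet_sub (h0 : 0 ≤ lam) (h1 : lam < 1) (hn : 1 ≤ (2 * n - 1) * lam) :
    Icc (-((n - 1) / (1 - lam))) ((n - 1) / (1 - lam)) ⊆ digitSet n lam - digitSet n lam := by
  rintro D ⟨hDl, hDu⟩
  set M := ((n : ℝ) - 1) / (1 - lam)
  have hn1 : 1 ≤ n := by
    exact_mod_cast (show (1 : ℝ) ≤ n by nlinarith)
  have hcast : ((2 * n - 1 : ℕ) : ℝ) = 2 * n - 1 := by
    push_cast [Nat.cast_sub (by omega : 1 ≤ 2 * n)]; ring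
  have h2M : ((2 * n - 1 : ℕ) - 1 : ℝ) / (1 - lam) = 2 * M := by
    rw [hcast]; ring
  have hz : D + M ∈ digitSet (2 * n - 1) lam :=
    Icc_subset_digitSet h1 (by rwa [hcast]) ⟨by linarith, by rw [h2M]; linarith⟩
  obtain ⟨x, hx, y, hy, hxy⟩ := exists_add_eq_add_of_mem_digitSet h0 h1 hz
  exact ⟨y, hy, x, hx, by linarith⟩

theorem hasAP_succ_digitSet (h0 : 0 < lam) (h1 : lam < 1) (hn : 1 ≤ (2 * n - 1) * lam) :
    HasAP (digitSet n lam) (n + 1) := by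
  have hn1 : 1 ≤ n := by
    exact_mod_cast (show (1 : ℝ) ≤ n by nlinarith)
  have hD : 1 / (2 * lam) ∈ Icc (-((n - 1) / (1 - lam))) ((n - 1) / (1 - lam)) := by
    have hM : 1 / (2 * lam) ≤ (n - 1) / (1 - lam) := by
      rw [div_le_div_iff₀ (by positivity) (by linarith)]
      linarith
    exact ⟨by linarith [show 0 ≤ 1 / (2 * lam) by positivity], hM⟩
  obtain ⟨y, hy, x, hx, hxy⟩ := Icc_subset_digitSet_sub h0.le h1 hn hD
  refine ⟨lam * x, 1 / 2, by norm_num, fun i hi => (mem_digitSet_iff h0.le h1).2 ?_⟩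
  obtain ⟨p, rfl | rfl⟩ := Nat.even_or_odd' i
  · exact ⟨p, by omega, x, hx, by push_cast; ring⟩
  · refine ⟨p, by omega, y, hy, ?_⟩
    have hstep : lam * y = lam * x + 1 / 2 := by
      rw [eq_add_of_sub_eq hxy]
      field_simp
      ring
    rw [hstep]
    push_cast
    ring

end Construction

theorem natCast_eq_of_abs_sub_lt {d d' : ℕ} {u u' c : ℝ} (hu : u ∈ Icc 0 c) (hu' : u' ∈ Icc 0 c)
    (h : |(d' + u') - (d + u)| < 1 - c) : d = d' := by
  obtain ⟨hu0, huc⟩ := hu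
  obtain ⟨hu'0, hu'c⟩ := hu'
  rw [abs_lt] at h
  by_contra hne
  rcases Nat.lt_or_gt_of_ne hne with hlt | hlt
  · have : (d : ℝ) + 1 ≤ d' := by exact_mod_cast hlt
    linarith
  · have : (d' : ℝ) + 1 ≤ d := by exact_mod_cast hlt
    linarith

section NoLongAP

variable {n : ℕ} {lam : ℝ}

theorem le_of_forall_add_mul_mem_digitSet (h0 : 0 ≤ lam) (h1 : lam < 1) {a δ : ℝ} (hδ : 0 < δ)
    (H : ∀ i ≤ n, a + i * δ ∈ digitSet n lam) : δ ≤ lam * ((n - 1) / (1 - lam)) := by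
  choose! d hd y hy hxy using fun i hi => (mem_digitSet_iff h0 h1).1 (H i hi)
  have hsame (i j : ℕ) (hij : i < j) (hj : j ≤ n) (hdij : d i = d j) :
      δ ≤ lam * ((n - 1) / (1 - lam)) := by
    have hyi := digitSet_subset_Icc h0 h1 (hy i (by omega))
    have hyj := digitSet_subset_Icc h0 h1 (hy j hj)
    have hxi := hxy i (by omega)
    have hxj := hxy j hj
    rw [hdij] at hxi
    have hji : (1 : ℝ) ≤ j - i := by
      have : (i : ℝ) + 1 ≤ j := by exact_mod_cast hij
      linarith
    nlinarith [mul_le_mul_of_nonneg_left hyj.2 h0, mul_nonneg h0 hyi.1]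
  obtain ⟨i, hi, j, hj, hij, hdij⟩ := Finset.exists_ne_map_eq_of_card_lt_of_maps_to
    (s := Finset.range (n + 1)) (t := Finset.range n) (f := d) (by simp)
    (fun i hi => Finset.mem_range.2 (hd i (Nat.lt_succ_iff.1 (Finset.mem_range.1 hi))))
  rw [Finset.mem_range] at hi hj
  rcases Nat.lt_or_gt_of_ne hij with h | h
  · exact hsame i j h (by omega) hdij
  · exact hsame j i h (by omega) hdij.symm

theorem exists_forall_add_mul_div_mem_digitSet (h0 : 0 < lam) (h1 : lam < 1)
    (hsmall : (2 * n - 1) * lam < 1) {a δ : ℝ} (hδ : 0 < δ)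
    (H : ∀ i ≤ n, a + i * δ ∈ digitSet n lam) :
    ∃ a', ∀ i ≤ n, a' + i * (δ / lam) ∈ digitSet n lam := by
  set M := ((n : ℝ) - 1) / (1 - lam)
  have hδM : δ ≤ lam * M := le_of_forall_add_mul_mem_digitSet h0.le h1 hδ H
  have hgap : lam * M < 1 - lam * M := by
    have hM : M * (1 - lam) = n - 1 := div_mul_cancel₀ _ (by linarith)
    by_contra! h
    nlinarith [mul_le_mul_of_nonneg_right h (by linarith : (0 : ℝ) ≤ 1 - lam)]
  choose! d _ y hy hxy using fun i hi => (mem_digitSet_iff h0.le h1).1 (H i hi)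
  have hpiece (i : ℕ) (hi : i ≤ n) : lam * y i ∈ Icc 0 (lam * M) :=
    ⟨mul_nonneg h0.le (digitSet_subset_Icc h0.le h1 (hy i hi)).1,
      mul_le_mul_of_nonneg_left (digitSet_subset_Icc h0.le h1 (hy i hi)).2 h0.le⟩
  have hconst (i : ℕ) (hi : i ≤ n) : d i = d 0 := by
    induction i with
    | zero => rfl
    | succ i ih =>
      rw [← ih (by omega)]
      refine (natCast_eq_of_abs_sub_lt (hpiece i (by omega)) (hpiece (i + 1) hi) ?_).symm
      rw [← hxy i (by omega), ← hxy (i + 1) hi]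
      push_cast
      rw [show a + (i + 1) * δ - (a + i * δ) = δ by ring, abs_of_pos hδ]
      linarith
  refine ⟨(a - d 0) / lam, fun i hi => ?_⟩
  convert hy i hi using 1
  have hxi := hxy i hi
  rw [hconst i hi] at hxi
  field_simp
  linarith

theorem not_hasAP_succ_digitSet (h0 : 0 < lam) (h1 : lam < 1) (hsmall : (2 * n - 1) * lam < 1) :
    ¬ HasAP (digitSet n lam) (n + 1) := by
  rintro ⟨a, δ, hδ, H⟩
  have hscaled (k : ℕ) : ∃ a', ∀ i ≤ n, a' + i * (δ / lam ^ k) ∈ digitSet n lam := by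
    induction k with
    | zero => exact ⟨a, fun i hi => by simpa using H i (by omega)⟩
    | succ k ih =>
      obtain ⟨a', ha'⟩ := ih
      simpa only [pow_succ, div_div] using
        exists_forall_add_mul_div_mem_digitSet h0 h1 hsmall (by positivity) ha'
  have hbound (k : ℕ) : δ ≤ lam ^ k * (lam * ((n - 1) / (1 - lam))) := by
    obtain ⟨a', ha'⟩ := hscaled k
    have := le_of_forall_add_mul_mem_digitSet h0.le h1 (by positivity) ha'
    rwa [div_le_iff₀ (by positivity), mul_comm] at this
  have hlim : Tendsto (fun k => lam ^ k * (lam * ((n - 1) / (1 - lam)))) atTop (𝓝 0) := by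
    simpa using (tendsto_pow_atTop_nhds_zero_of_lt_one h0.le h1).mul_const _
  exact hδ.not_ge (ge_of_tendsto' hlim hbound)

end NoLongAP

/-- The maximal length of an arithmetic progression in `E_λ^n` equals `n`
(i.e. it contains an A.P. of length `n` but none of length `n + 1`) if and only if
`λ < 1/(2n - 1)`. -/
theorem max_ap_length_eq_n_iff (n : ℕ) (hn : 2 ≤ n)
    (lam : ℝ) (hlam : lam ∈ Set.Ioo (0:ℝ) (1 / n)) :
    ((∃ a δ : ℝ, 0 < δ ∧ ∀ i : ℕ, i < n → a + i * δ ∈ selfSimilarSet n lam) ∧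
      ¬ ∃ a δ : ℝ, 0 < δ ∧ ∀ i : ℕ, i ≤ n → a + i * δ ∈ selfSimilarSet n lam)
    ↔ lam < 1 / (2 * n - 1) := by
  obtain ⟨h0, hlt⟩ := hlam
  have hn' : (2 : ℝ) ≤ n := by exact_mod_cast hn
  have hnlam : n * lam < 1 := by rwa [lt_div_iff₀ (by positivity), mul_comm] at hlt
  have h1 : lam < 1 := by nlinarith
  have hK : 0 < (lam + (1 - n * lam) / (n - 1)) * lam :=
    mul_pos (add_pos h0 (div_pos (by linarith) (by linarith))) h0
  simp_rw [← Nat.lt_add_one_iff]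
  change HasAP _ n ∧ ¬ HasAP _ (n + 1) ↔ _
  rw [selfSimilarSet_eq_smul, hasAP_smul_iff hK, hasAP_smul_iff hK,
    lt_div_iff₀ (by linarith), mul_comm]
  refine ⟨fun ⟨_, hno⟩ => ?_, fun hsmall => ⟨hasAP_digitSet, not_hasAP_succ_digitSet h0 h1 hsmall⟩⟩
  by_contra! hbig
  exact hno (hasAP_succ_digitSet h0 h1 hbig)
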